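/- Let G, H, K, L be finite groups, X ≤ G×H, Y ≤ H×K and Z ≤ G×L subgroups, and let M be a left 𝕜X-module, N a left 𝕜Y-module, P a left 𝕜Z-module. Then there is an isomorphism of 𝕜[(X*Y)°*Z]-modules, natural in M, N and P: LHom^{X*Y,Z}_{𝕜G}(M ⊗^{X,Y}_{𝕜H} N, P) ≅ LHom^{Y, X°*Z}_{𝕜H}(N, LHom^{X,Z}_{𝕜G}(M,P)), given by f ↦ (n ↦ (m ↦ f(m⊗n))). -/

import Mathlib

namespace Stmt7

/-- `k₁(X) = {g ∈ G ∣ (g,1) ∈ X}`. -/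
def k1 {G H : Type*} [Group G] [Group H] (X : Subgroup (G × H)) : Subgroup G :=
  X.comap (MonoidHom.inl G H)

/-- `k₂(X) = {h ∈ H ∣ (1,h) ∈ X}`. -/
def k2 {G H : Type*} [Group G] [Group H] (X : Subgroup (G × H)) : Subgroup H :=
  X.comap (MonoidHom.inr G H)

/-- `p₁(X)`, the image of `X` under the first projection. -/
def p1 {G H : Type*} [Group G] [Group H] (X : Subgroup (G × H)) : Subgroup G :=
  X.map (MonoidHom.fst G H)

/-- `p₂(X)`, the image of `X` under the second projection. -/
def p2 {G H : Type*} [Group G] [Group H] (X : Subgroup (G × H)) : Subgroup H :=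
  X.map (MonoidHom.snd G H)

/-- The opposite subgroup `X° = {(h,g) ∣ (g,h) ∈ X}`. -/
def opp {G H : Type*} [Group G] [Group H] (X : Subgroup (G × H)) : Subgroup (H × G) :=
  X.map ((MulEquiv.prodComm : (G × H) ≃* (H × G)).toMonoidHom)

/-- The composition `X*Y` of subgroup correspondences. -/
def comp {G H K : Type*} [Group G] [Group H] [Group K]
    (X : Subgroup (G × H)) (Y : Subgroup (H × K)) : Subgroup (G × K) where
  carrier := {gk | ∃ h : H, (gk.1, h) ∈ X ∧ (h, gk.2) ∈ Y}
  one_mem' := ⟨1, X.one_mem, Y.one_mem⟩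
  mul_mem' := by
    rintro ⟨g, k⟩ ⟨g', k'⟩ ⟨h, hX, hY⟩ ⟨h', hX', hY'⟩
    exact ⟨h * h', X.mul_mem hX hX', Y.mul_mem hY hY'⟩
  inv_mem' := by
    rintro ⟨g, k⟩ ⟨h, hX, hY⟩
    exact ⟨h⁻¹, X.inv_mem hX, Y.inv_mem hY⟩

lemma mem_comp {G H K : Type*} [Group G] [Group H] [Group K]
    {X : Subgroup (G × H)} {Y : Subgroup (H × K)} {x : G × K} :
    x ∈ comp X Y ↔ ∃ h : H, (x.1, h) ∈ X ∧ (h, x.2) ∈ Y := Iff.rfl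

lemma mem_opp {G H : Type*} [Group G] [Group H] {X : Subgroup (G × H)} {x : H × G} :
    x ∈ opp X ↔ (x.2, x.1) ∈ X := by
  rw [opp, Subgroup.mem_map]
  constructor
  · rintro ⟨⟨g, h⟩, hgh, rfl⟩
    simpa using hgh
  · intro hx
    exact ⟨(x.2, x.1), hx, rfl⟩

/-- The diagonal subgroup `Δ(P) = {(g,g) ∣ g ∈ P} ≤ G × G`. -/
def diag {G : Type*} [Group G] (P : Subgroup G) : Subgroup (G × G) :=
  (P.subtype.prod P.subtype).range

/-- The twisted diagonal subgroup `Δ(P,φ,Q) = {(φ y, y) ∣ y ∈ Q} ≤ G × H`. -/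
def tdiag {G H : Type*} [Group G] [Group H] (P : Subgroup G) (Q : Subgroup H)
    (φ : Q ≃* P) : Subgroup (G × H) :=
  ((P.subtype.comp φ.toMonoidHom).prod Q.subtype).range

open scoped TensorProduct

section ExtendedTensor

variable {𝕜 : Type*} [CommRing 𝕜]

/-- The submodule of relations defining the balanced tensor product
`M ⊗_{𝕜[k₂(X)∩k₁(Y)]} N` over the middle group: it is spanned by the elements
`(m·b) ⊗ n - m ⊗ (b·n)` with `b ∈ k₂(X)∩k₁(Y)`, where `m·b = (1,b⁻¹)·m` and
`b·n = (b,1)·n`. -/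
def midRel {A B C : Type*} [Group A] [Group B] [Group C]
    {M N : Type*} [AddCommGroup M] [Module 𝕜 M] [AddCommGroup N] [Module 𝕜 N]
    (X : Subgroup (A × B)) (Y : Subgroup (B × C))
    (ρ : Representation 𝕜 ↥X M) (σ : Representation 𝕜 ↥Y N) :
    Submodule 𝕜 (M ⊗[𝕜] N) :=
  Submodule.span 𝕜 {z | ∃ (b : B) (h1 : (((1 : A), b⁻¹) : A × B) ∈ X)
    (h2 : ((b, (1 : C)) : B × C) ∈ Y) (m : M) (n : N),
      z = (ρ ⟨((1 : A), b⁻¹), h1⟩ m) ⊗ₜ[𝕜] n - m ⊗ₜ[𝕜] (σ ⟨(b, (1 : C)), h2⟩ n)}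

/-- The underlying `𝕜`-module of the extended tensor product `M ⊗^{X,Y}_{𝕜B} N`. -/
abbrev ExtTen {A B C : Type*} [Group A] [Group B] [Group C]
    {M N : Type*} [AddCommGroup M] [Module 𝕜 M] [AddCommGroup N] [Module 𝕜 N]
    (X : Subgroup (A × B)) (Y : Subgroup (B × C))
    (ρ : Representation 𝕜 ↥X M) (σ : Representation 𝕜 ↥Y N) :=
  (M ⊗[𝕜] N) ⧸ midRel X Y ρ σ

/-- The canonical projection onto the extended tensor product. -/
def extMk {A B C : Type*} [Group A] [Group B] [Group C]
    {M N : Type*} [AddCommGroup M] [Module 𝕜 M] [AddCommGroup N] [Module 𝕜 N]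
    (X : Subgroup (A × B)) (Y : Subgroup (B × C))
    (ρ : Representation 𝕜 ↥X M) (σ : Representation 𝕜 ↥Y N) :
    (M ⊗[𝕜] N) →ₗ[𝕜] ExtTen X Y ρ σ :=
  (midRel X Y ρ σ).mkQ

/-- The `𝕜`-module `LHom^{X,Y}_{𝕜A}(M,N) = Hom_{𝕜[k₁(X)∩k₁(Y)]}(M,N)` of
`𝕜`-linear maps commuting with the actions of `k₁(X)∩k₁(Y)` (via `(a,1)`). -/
def lHomSub {A B C : Type*} [Group A] [Group B] [Group C]
    {M N : Type*} [AddCommGroup M] [Module 𝕜 M] [AddCommGroup N] [Module 𝕜 N]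
    (X : Subgroup (A × B)) (Y : Subgroup (A × C))
    (ρ : Representation 𝕜 ↥X M) (σ : Representation 𝕜 ↥Y N) :
    Submodule 𝕜 (M →ₗ[𝕜] N) where
  carrier := {f | ∀ (a : A) (h1 : ((a, (1 : B)) : A × B) ∈ X)
      (h2 : ((a, (1 : C)) : A × C) ∈ Y) (m : M),
        f (ρ ⟨(a, 1), h1⟩ m) = σ ⟨(a, 1), h2⟩ (f m)}
  add_mem' := by
    intro f g hf hg a h1 h2 m
    simp only [LinearMap.add_apply, hf a h1 h2 m, hg a h1 h2 m, map_add]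
  zero_mem' := by
    intro a h1 h2 m
    simp
  smul_mem' := by
    intro c f hf a h1 h2 m
    simp only [LinearMap.smul_apply, hf a h1 h2 m, map_smul]

/-- The `𝕜`-module `RHom^{X,Y}_{𝕜A}(M,N) = Hom_{𝕜[k₂(X)∩k₂(Y)]}(M,N)` of
`𝕜`-linear maps commuting with the actions of `k₂(X)∩k₂(Y)` (via `(1,a)`). -/
def rHomSub {A B C : Type*} [Group A] [Group B] [Group C]
    {M N : Type*} [AddCommGroup M] [Module 𝕜 M] [AddCommGroup N] [Module 𝕜 N]
    (X : Subgroup (B × A)) (Y : Subgroup (C × A))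
    (ρ : Representation 𝕜 ↥X M) (σ : Representation 𝕜 ↥Y N) :
    Submodule 𝕜 (M →ₗ[𝕜] N) where
  carrier := {f | ∀ (a : A) (h1 : (((1 : B), a) : B × A) ∈ X)
      (h2 : (((1 : C), a) : C × A) ∈ Y) (m : M),
        f (ρ ⟨(1, a), h1⟩ m) = σ ⟨(1, a), h2⟩ (f m)}
  add_mem' := by
    intro f g hf hg a h1 h2 m
    simp only [LinearMap.add_apply, hf a h1 h2 m, hg a h1 h2 m, map_add]
  zero_mem' := by
    intro a h1 h2 m
    simp
  smul_mem' := by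
    intro c f hf a h1 h2 m
    simp only [LinearMap.smul_apply, hf a h1 h2 m, map_smul]

/-- The `𝕜`-module of `𝕜I`-linear maps between two representations of a group
`I`, e.g. `Hom_{𝕜[X*X°]}(-,-)` or `Hom_{𝕜X}(-,-)`. -/
def fullHomSub {I : Type*} [Group I]
    {M N : Type*} [AddCommGroup M] [Module 𝕜 M] [AddCommGroup N] [Module 𝕜 N]
    (ρ : Representation 𝕜 I M) (σ : Representation 𝕜 I N) :
    Submodule 𝕜 (M →ₗ[𝕜] N) where
  carrier := {f | ∀ (x : I) (m : M), f (ρ x m) = σ x (f m)}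
  add_mem' := by
    intro f g hf hg x m
    simp only [LinearMap.add_apply, hf x m, hg x m, map_add]
  zero_mem' := by
    intro x m
    simp
  smul_mem' := by
    intro c f hf x m
    simp only [LinearMap.smul_apply, hf x m, map_smul]

/-- Relations defining the induced module `Ind_{X'}^{X}(M') = 𝕜X ⊗_{𝕜X'} M'`:
spanned by `(b·a) ⊗ m - b ⊗ (a·m)` for `a ∈ X'`, `b ∈ X`. -/
noncomputable def indRel {I : Type*} [Group I] (X' X : Subgroup I)
    {M' : Type*} [AddCommGroup M'] [Module 𝕜 M']
    (ρ' : Representation 𝕜 ↥X' M') :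
    Submodule 𝕜 (MonoidAlgebra 𝕜 ↥X ⊗[𝕜] M') :=
  Submodule.span 𝕜 {z | ∃ (b : ↥X) (a : I) (h1 : a ∈ X') (h2 : a ∈ X) (m : M'),
    z = (MonoidAlgebra.single (b * ⟨a, h2⟩) (1 : 𝕜)) ⊗ₜ[𝕜] m -
        (MonoidAlgebra.single b (1 : 𝕜)) ⊗ₜ[𝕜] (ρ' ⟨a, h1⟩ m)}

/-- The underlying `𝕜`-module of the induced module `Ind_{X'}^{X}(M')`. -/
abbrev Ind {I : Type*} [Group I] (X' X : Subgroup I)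
    {M' : Type*} [AddCommGroup M'] [Module 𝕜 M']
    (ρ' : Representation 𝕜 ↥X' M') :=
  (MonoidAlgebra 𝕜 ↥X ⊗[𝕜] M') ⧸ indRel X' X ρ'

/-- The canonical projection onto the induced module. -/
noncomputable def indMk {I : Type*} [Group I] (X' X : Subgroup I)
    {M' : Type*} [AddCommGroup M'] [Module 𝕜 M']
    (ρ' : Representation 𝕜 ↥X' M') :
    (MonoidAlgebra 𝕜 ↥X ⊗[𝕜] M') →ₗ[𝕜] Ind X' X ρ' :=
  (indRel X' X ρ').mkQ

end ExtendedTensor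

section Homs

variable {G H : Type*} [Group G] [Group H]

lemma k1_prod_mem {X : Subgroup (G × H)} (u : ↥(k1 X)) :
    (((u : G), (1 : H)) : G × H) ∈ X := u.2

lemma k1_inv_prod_mem {X : Subgroup (G × H)} (u : ↥(k1 X)) :
    (((u : G)⁻¹, (1 : H)) : G × H) ∈ X := by
  simpa using X.inv_mem (k1_prod_mem u)

lemma k2_prod_mem {X : Subgroup (G × H)} (u : ↥(k2 X)) :
    (((1 : G), (u : H)) : G × H) ∈ X := u.2

/-- The embedding `k₁(X) →* X`, `u ↦ (u,1)`. -/
def k1Hom (X : Subgroup (G × H)) : ↥(k1 X) →* ↥X where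
  toFun u := ⟨((u : G), (1 : H)), u.2⟩
  map_one' := rfl
  map_mul' u v := Subtype.ext (by simp)

/-- The embedding `k₁(X) →* X°`, `u ↦ (1,u)`, giving the right `𝕜[k₁(X)]`-module
structure (read as a left module) on left `𝕜X°`-modules. -/
def k1HomOp (X : Subgroup (G × H)) : ↥(k1 X) →* ↥(opp X) where
  toFun u := ⟨((1 : H), (u : G)), mem_opp.mpr u.2⟩
  map_one' := rfl
  map_mul' u v := Subtype.ext (by simp)

/-- The embedding `k₂(X) →* X`, `u ↦ (1,u)`. -/
def k2Hom (X : Subgroup (G × H)) : ↥(k2 X) →* ↥X where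
  toFun u := ⟨((1 : G), (u : H)), u.2⟩
  map_one' := rfl
  map_mul' u v := Subtype.ext (by simp)

end Homs

/-!
The isomorphism is tensor–hom currying `f ↦ (n ↦ (m ↦ f (m ⊗ n)))`; what has to be checked is
that the side conditions match. If `(g,h) ∈ X` and `(h,1) ∈ Y`, then `(g,1) ∈ X*Y` acts on
`m ⊗ n` as `ρM (g,h) m ⊗ ρN (h,1) n`, so `k₁(X*Y)`-linearity of `f` amounts to `k₁(X)`-linearity
in `m` together with `k₁(Y)`-linearity in `n`, where `k₁(Y)` acts on `LHom^{X,Z}(M,P)` through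
`X°*Z`, i.e. by precomposing with `ρM (g,h)⁻¹`. The balancing relations for
`b ∈ k₂(X) ∩ k₁(Y)` are the case `g = 1` of this, so the uncurried map descends to `M ⊗^{X,Y} N`.
For equivariance, `(b,c) ∈ (X*Y)°*Z` comes with `g, h` such that `(g,h) ∈ X`, `(h,b) ∈ Y` and
`(g,c) ∈ Z`; the same `h` witnesses `(b,c) ∈ Y°*(X°*Z)`, and both actions send `f` to
`n, m ↦ ρP (g,c) (f (ρM (g,h)⁻¹ m ⊗ ρN (h,b)⁻¹ n))`.
-/

section Adjunction

variable {𝕜 : Type*} [CommRing 𝕜]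

/-- `τ` is the `𝕜[X*Y]`-module structure of the extended tensor product. -/
def IsExtTenRep {A B C : Type*} [Group A] [Group B] [Group C]
    {M N : Type*} [AddCommGroup M] [Module 𝕜 M] [AddCommGroup N] [Module 𝕜 N]
    {X : Subgroup (A × B)} {Y : Subgroup (B × C)}
    {ρ : Representation 𝕜 ↥X M} {σ : Representation 𝕜 ↥Y N}
    (τ : Representation 𝕜 ↥(comp X Y) (ExtTen X Y ρ σ)) : Prop :=
  ∀ (a : A) (c : C) (hac : (a, c) ∈ comp X Y) (b : B) (h1 : (a, b) ∈ X) (h2 : (b, c) ∈ Y)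
    (m : M) (n : N),
    τ ⟨(a, c), hac⟩ (extMk X Y ρ σ (m ⊗ₜ[𝕜] n)) =
      extMk X Y ρ σ ((ρ ⟨(a, b), h1⟩ m) ⊗ₜ[𝕜] (σ ⟨(b, c), h2⟩ n))

/-- `τ` is the `𝕜[X°*Y]`-module structure of `LHom^{X,Y}_{𝕜A}(M,N)`. -/
def IsLHomRep {A B C : Type*} [Group A] [Group B] [Group C]
    {M N : Type*} [AddCommGroup M] [Module 𝕜 M] [AddCommGroup N] [Module 𝕜 N]
    {X : Subgroup (A × B)} {Y : Subgroup (A × C)}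
    {ρ : Representation 𝕜 ↥X M} {σ : Representation 𝕜 ↥Y N}
    (τ : Representation 𝕜 ↥(comp (opp X) Y) ↥(lHomSub X Y ρ σ)) : Prop :=
  ∀ (b : B) (c : C) (hbc : (b, c) ∈ comp (opp X) Y) (a : A) (h1 : (a, b) ∈ X)
    (h2 : (a, c) ∈ Y) (f : ↥(lHomSub X Y ρ σ)) (m : M),
    ((τ ⟨(b, c), hbc⟩ f : M →ₗ[𝕜] N)) m =
      σ ⟨(a, c), h2⟩ ((f : M →ₗ[𝕜] N) (ρ (⟨(a, b), h1⟩)⁻¹ m))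

section General

variable {A B C : Type*} [Group A] [Group B] [Group C]
  {M N P : Type*} [AddCommGroup M] [Module 𝕜 M] [AddCommGroup N] [Module 𝕜 N]
  [AddCommGroup P] [Module 𝕜 P]
  {X : Subgroup (A × B)} {Y : Subgroup (B × C)}
  {ρ : Representation 𝕜 ↥X M} {σ : Representation 𝕜 ↥Y N}

lemma extTen_hom_ext {f f' : ExtTen X Y ρ σ →ₗ[𝕜] P}
    (h : ∀ m n, f (extMk X Y ρ σ (m ⊗ₜ[𝕜] n)) = f' (extMk X Y ρ σ (m ⊗ₜ[𝕜] n))) : f = f' :=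
  Submodule.linearMap_qext _ (TensorProduct.ext' h)

lemma IsExtTenRep.inv_apply {τ : Representation 𝕜 ↥(comp X Y) (ExtTen X Y ρ σ)}
    (hτ : IsExtTenRep τ) {a : A} {b : B} {c : C} (hac : (a, c) ∈ comp X Y)
    (h1 : (a, b) ∈ X) (h2 : (b, c) ∈ Y) (m : M) (n : N) :
    τ (⟨(a, c), hac⟩)⁻¹ (extMk X Y ρ σ (m ⊗ₜ[𝕜] n)) =
      extMk X Y ρ σ ((ρ (⟨(a, b), h1⟩)⁻¹ m) ⊗ₜ[𝕜] (σ (⟨(b, c), h2⟩)⁻¹ n)) := by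
  rw [Representation.inv_apply_eq_iff, hτ a c hac b h1 h2, Representation.self_inv_apply,
    Representation.self_inv_apply]

lemma IsExtTenRep.apply_left {τ : Representation 𝕜 ↥(comp X Y) (ExtTen X Y ρ σ)}
    (hτ : IsExtTenRep τ) {a : A} (hac : (a, (1 : C)) ∈ comp X Y) (ha : (a, (1 : B)) ∈ X)
    (m : M) (n : N) :
    τ ⟨(a, 1), hac⟩ (extMk X Y ρ σ (m ⊗ₜ[𝕜] n)) =
      extMk X Y ρ σ ((ρ ⟨(a, 1), ha⟩ m) ⊗ₜ[𝕜] n) := by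
  rw [hτ a 1 hac 1 ha Y.one_mem, show (⟨(1, 1), Y.one_mem⟩ : ↥Y) = 1 from rfl, map_one,
    Module.End.one_apply]

lemma subtype_linearMap_ext₂ {Q : Submodule 𝕜 (M →ₗ[𝕜] P)} {S : Submodule 𝕜 (N →ₗ[𝕜] ↥Q)}
    {u v : ↥S}
    (h : ∀ n m, (((u : N →ₗ[𝕜] ↥Q) n : M →ₗ[𝕜] P)) m = (((v : N →ₗ[𝕜] ↥Q) n : M →ₗ[𝕜] P)) m) :
    u = v :=
  Subtype.ext <| LinearMap.ext fun n => Subtype.ext <| LinearMap.ext (h n)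

end General

variable {G H K L : Type*} [Group G] [Group H] [Group K] [Group L]
  {X : Subgroup (G × H)} {Y : Subgroup (H × K)} {Z : Subgroup (G × L)}
  {M N P : Type*} [AddCommGroup M] [Module 𝕜 M] [AddCommGroup N] [Module 𝕜 N]
  [AddCommGroup P] [Module 𝕜 P]
  {ρM : Representation 𝕜 ↥X M} {ρN : Representation 𝕜 ↥Y N} {ρP : Representation 𝕜 ↥Z P}
  {ρT : Representation 𝕜 ↥(comp X Y) (ExtTen X Y ρM ρN)}
  {ρI : Representation 𝕜 ↥(comp (opp X) Z) ↥(lHomSub X Z ρM ρP)}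

def curryExtTen (f : ExtTen X Y ρM ρN →ₗ[𝕜] P) : N →ₗ[𝕜] M →ₗ[𝕜] P :=
  (TensorProduct.lcurry (RingHom.id 𝕜) M N P (f ∘ₗ extMk X Y ρM ρN)).flip

lemma curryExtTen_apply (f : ExtTen X Y ρM ρN →ₗ[𝕜] P) (n : N) (m : M) :
    curryExtTen f n m = f (extMk X Y ρM ρN (m ⊗ₜ[𝕜] n)) := rfl

lemma curryExtTen_mem_lHomSub (hT : IsExtTenRep ρT) {f : ExtTen X Y ρM ρN →ₗ[𝕜] P}
    (hf : f ∈ lHomSub (comp X Y) Z ρT ρP) (n : N) :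
    curryExtTen f n ∈ lHomSub X Z ρM ρP := by
  intro a h1 h2 m
  have hXY : (a, (1 : K)) ∈ comp X Y := ⟨1, h1, Y.one_mem⟩
  rw [curryExtTen_apply, curryExtTen_apply, ← hT.apply_left hXY h1]
  exact hf a hXY h2 _

def curryLHom (hT : IsExtTenRep ρT) (f : ↥(lHomSub (comp X Y) Z ρT ρP)) :
    N →ₗ[𝕜] ↥(lHomSub X Z ρM ρP) :=
  LinearMap.codRestrict _ (curryExtTen f.1) (curryExtTen_mem_lHomSub hT f.2)

lemma curryLHom_apply (hT : IsExtTenRep ρT) (f : ↥(lHomSub (comp X Y) Z ρT ρP))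
    (n : N) (m : M) :
    (curryLHom hT f n : M →ₗ[𝕜] P) m =
      (f : ExtTen X Y ρM ρN →ₗ[𝕜] P) (extMk X Y ρM ρN (m ⊗ₜ[𝕜] n)) :=
  rfl

lemma curryLHom_mem_lHomSub (hT : IsExtTenRep ρT) (hI : IsLHomRep ρI)
    (f : ↥(lHomSub (comp X Y) Z ρT ρP)) :
    curryLHom hT f ∈ lHomSub Y (comp (opp X) Z) ρN ρI := by
  intro h h1 h2 n
  obtain ⟨g, hgX, hgZ⟩ := mem_comp.mp h2
  replace hgX : (g, h) ∈ X := mem_opp.mp hgX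
  have hXY : (g, (1 : K)) ∈ comp X Y := ⟨h, hgX, h1⟩
  refine Subtype.ext (LinearMap.ext fun m => ?_)
  rw [hI h 1 h2 g hgX hgZ, curryLHom_apply, curryLHom_apply, ← f.2 g hXY hgZ,
    hT g 1 hXY h hgX h1, Representation.self_inv_apply]

lemma midRel_le_ker_lift (hI : IsLHomRep ρI) {u : N →ₗ[𝕜] ↥(lHomSub X Z ρM ρP)}
    (hu : u ∈ lHomSub Y (comp (opp X) Z) ρN ρI) :
    midRel X Y ρM ρN ≤
      LinearMap.ker (TensorProduct.lift ((lHomSub X Z ρM ρP).subtype ∘ₗ u).flip) := by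
  rw [midRel, Submodule.span_le]
  rintro _ ⟨h, h1, h2, m, n, rfl⟩
  have hX : ((1 : G), h) ∈ X := by simpa using X.inv_mem h1
  have hXZ : (h, (1 : L)) ∈ comp (opp X) Z := ⟨1, mem_opp.mpr hX, Z.one_mem⟩
  have hinv : (⟨(1, h), hX⟩ : ↥X)⁻¹ = ⟨(1, h⁻¹), h1⟩ := Subtype.ext (by simp)
  simp only [SetLike.mem_coe, LinearMap.mem_ker, map_sub, TensorProduct.lift.tmul,
    LinearMap.flip_apply, LinearMap.comp_apply, Submodule.subtype_apply]
  rw [hu h h2 hXZ n, hI h 1 hXZ 1 hX Z.one_mem, hinv,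
    show (⟨(1, 1), Z.one_mem⟩ : ↥Z) = 1 from rfl, map_one, Module.End.one_apply, sub_self]

def uncurryLHom (hI : IsLHomRep ρI) (u : ↥(lHomSub Y (comp (opp X) Z) ρN ρI)) :
    ExtTen X Y ρM ρN →ₗ[𝕜] P :=
  (midRel X Y ρM ρN).liftQ _ (midRel_le_ker_lift hI u.2)

lemma uncurryLHom_extMk (hI : IsLHomRep ρI) (u : ↥(lHomSub Y (comp (opp X) Z) ρN ρI))
    (m : M) (n : N) :
    uncurryLHom hI u (extMk X Y ρM ρN (m ⊗ₜ[𝕜] n)) =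
      (((u : N →ₗ[𝕜] ↥(lHomSub X Z ρM ρP)) n : M →ₗ[𝕜] P)) m :=
  rfl

lemma uncurryLHom_mem_lHomSub (hT : IsExtTenRep ρT) (hI : IsLHomRep ρI)
    (u : ↥(lHomSub Y (comp (opp X) Z) ρN ρI)) :
    uncurryLHom hI u ∈ lHomSub (comp X Y) Z ρT ρP := by
  intro g h1 h2
  obtain ⟨h, hX, hY⟩ := mem_comp.mp h1
  have hXZ : (h, (1 : L)) ∈ comp (opp X) Z := ⟨g, mem_opp.mpr hX, h2⟩
  refine LinearMap.congr_fun (extTen_hom_ext fun m n => ?_ :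
    uncurryLHom hI u ∘ₗ ρT ⟨(g, 1), h1⟩ = ρP ⟨(g, 1), h2⟩ ∘ₗ uncurryLHom hI u)
  rw [LinearMap.comp_apply, LinearMap.comp_apply, hT g 1 h1 h hX hY, uncurryLHom_extMk,
    uncurryLHom_extMk, u.2 h hY hXZ, hI h 1 hXZ g hX h2, Representation.inv_self_apply]

def extTenLHomEquiv (hT : IsExtTenRep ρT) (hI : IsLHomRep ρI) :
    ↥(lHomSub (comp X Y) Z ρT ρP) ≃ₗ[𝕜] ↥(lHomSub Y (comp (opp X) Z) ρN ρI) where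
  toFun f := ⟨curryLHom hT f, curryLHom_mem_lHomSub hT hI f⟩
  invFun u := ⟨uncurryLHom hI u, uncurryLHom_mem_lHomSub hT hI u⟩
  map_add' _ _ := subtype_linearMap_ext₂ fun _ _ => rfl
  map_smul' _ _ := subtype_linearMap_ext₂ fun _ _ => rfl
  left_inv _ := Subtype.ext <| extTen_hom_ext fun _ _ => rfl
  right_inv _ := subtype_linearMap_ext₂ fun _ _ => rfl

lemma extTenLHomEquiv_apply (hT : IsExtTenRep ρT) (hI : IsLHomRep ρI)
    (f : ↥(lHomSub (comp X Y) Z ρT ρP)) (n : N) (m : M) :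
    (((extTenLHomEquiv hT hI f : N →ₗ[𝕜] ↥(lHomSub X Z ρM ρP)) n : M →ₗ[𝕜] P)) m =
      (f : ExtTen X Y ρM ρN →ₗ[𝕜] P) (extMk X Y ρM ρN (m ⊗ₜ[𝕜] n)) :=
  rfl

lemma extTenLHomEquiv_map_rep (hT : IsExtTenRep ρT) (hI : IsLHomRep ρI)
    {ρL : Representation 𝕜 ↥(comp (opp (comp X Y)) Z) ↥(lHomSub (comp X Y) Z ρT ρP)}
    {ρR : Representation 𝕜 ↥(comp (opp Y) (comp (opp X) Z))
      ↥(lHomSub Y (comp (opp X) Z) ρN ρI)}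
    (hL : IsLHomRep ρL) (hR : IsLHomRep ρR) {x : K × L}
    (hx1 : x ∈ comp (opp (comp X Y)) Z) (hx2 : x ∈ comp (opp Y) (comp (opp X) Z))
    (f : ↥(lHomSub (comp X Y) Z ρT ρP)) :
    extTenLHomEquiv hT hI (ρL ⟨x, hx1⟩ f) = ρR ⟨x, hx2⟩ (extTenLHomEquiv hT hI f) := by
  obtain ⟨b, c⟩ := x
  obtain ⟨g, hgb, hgc⟩ := mem_comp.mp hx1
  replace hgb : (g, b) ∈ comp X Y := mem_opp.mp hgb
  obtain ⟨h, hX, hY⟩ := mem_comp.mp hgb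
  have hXZ : (h, c) ∈ comp (opp X) Z := ⟨g, mem_opp.mpr hX, hgc⟩
  refine subtype_linearMap_ext₂ fun n m => ?_
  rw [extTenLHomEquiv_apply, hL b c hx1 g hgb hgc, hT.inv_apply hgb hX hY,
    hR b c hx2 h hY hXZ, hI h c hXZ g hX hgc, extTenLHomEquiv_apply]

end Adjunction

theorem stmt7_general {𝕜 : Type*} [CommRing 𝕜]
    {G H K L : Type*} [Group G] [Group H] [Group K] [Group L]
    (X : Subgroup (G × H)) (Y : Subgroup (H × K)) (Z : Subgroup (G × L))
    {M N P : Type*} [AddCommGroup M] [Module 𝕜 M] [AddCommGroup N] [Module 𝕜 N]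
    [AddCommGroup P] [Module 𝕜 P]
    (ρM : Representation 𝕜 ↥X M) (ρN : Representation 𝕜 ↥Y N)
    (ρP : Representation 𝕜 ↥Z P)
    -- the `𝕜[X*Y]`-module structure on `M ⊗^{X,Y}_{𝕜H} N`
    (ρT : Representation 𝕜 ↥(comp X Y) (ExtTen X Y ρM ρN))
    (hρT : ∀ (g : G) (k : K) (hgk : (g, k) ∈ comp X Y) (h : H)
      (h1 : (g, h) ∈ X) (h2 : (h, k) ∈ Y) (m : M) (n : N),
      ρT ⟨(g, k), hgk⟩ (extMk X Y ρM ρN (m ⊗ₜ[𝕜] n)) =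
        extMk X Y ρM ρN ((ρM ⟨(g, h), h1⟩ m) ⊗ₜ[𝕜] (ρN ⟨(h, k), h2⟩ n)))
    -- the `𝕜[(X*Y)°*Z]`-module structure on `LHom^{X*Y,Z}(M ⊗^{X,Y} N, P)`
    (ρL : Representation 𝕜 ↥(comp (opp (comp X Y)) Z)
      ↥(lHomSub (comp X Y) Z ρT ρP))
    (hρL : ∀ (b : K) (c : L) (hbc : (b, c) ∈ comp (opp (comp X Y)) Z)
      (a : G) (h1 : (a, b) ∈ comp X Y) (h2 : (a, c) ∈ Z)
      (f : ↥(lHomSub (comp X Y) Z ρT ρP)) (t : ExtTen X Y ρM ρN),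
      ((ρL ⟨(b, c), hbc⟩ f : ExtTen X Y ρM ρN →ₗ[𝕜] P)) t =
        ρP ⟨(a, c), h2⟩ ((f : ExtTen X Y ρM ρN →ₗ[𝕜] P) (ρT (⟨(a, b), h1⟩)⁻¹ t)))
    -- the `𝕜[X°*Z]`-module structure on `LHom^{X,Z}(M,P)`
    (ρI : Representation 𝕜 ↥(comp (opp X) Z) ↥(lHomSub X Z ρM ρP))
    (hρI : ∀ (b : H) (c : L) (hbc : (b, c) ∈ comp (opp X) Z)
      (a : G) (h1 : (a, b) ∈ X) (h2 : (a, c) ∈ Z)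
      (f : ↥(lHomSub X Z ρM ρP)) (m : M),
      ((ρI ⟨(b, c), hbc⟩ f : M →ₗ[𝕜] P)) m =
        ρP ⟨(a, c), h2⟩ ((f : M →ₗ[𝕜] P) (ρM (⟨(a, b), h1⟩)⁻¹ m)))
    -- the `𝕜[Y°*(X°*Z)]`-module structure on `LHom^{Y,X°*Z}(N, LHom^{X,Z}(M,P))`
    (ρR : Representation 𝕜 ↥(comp (opp Y) (comp (opp X) Z))
      ↥(lHomSub Y (comp (opp X) Z) ρN ρI))
    (hρR : ∀ (b : K) (c : L) (hbc : (b, c) ∈ comp (opp Y) (comp (opp X) Z))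
      (a : H) (h1 : (a, b) ∈ Y) (h2 : (a, c) ∈ comp (opp X) Z)
      (f : ↥(lHomSub Y (comp (opp X) Z) ρN ρI)) (n : N),
      ((ρR ⟨(b, c), hbc⟩ f : N →ₗ[𝕜] ↥(lHomSub X Z ρM ρP))) n =
        ρI ⟨(a, c), h2⟩ ((f : N →ₗ[𝕜] ↥(lHomSub X Z ρM ρP)) (ρN (⟨(a, b), h1⟩)⁻¹ n))) :
    ∃ e : ↥(lHomSub (comp X Y) Z ρT ρP) ≃ₗ[𝕜] ↥(lHomSub Y (comp (opp X) Z) ρN ρI),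
      (∀ (f : ↥(lHomSub (comp X Y) Z ρT ρP)) (n : N) (m : M),
        (((e f : N →ₗ[𝕜] ↥(lHomSub X Z ρM ρP)) n : M →ₗ[𝕜] P)) m =
          (f : ExtTen X Y ρM ρN →ₗ[𝕜] P) (extMk X Y ρM ρN (m ⊗ₜ[𝕜] n))) ∧
      (∀ (x : K × L) (hx1 : x ∈ comp (opp (comp X Y)) Z)
        (hx2 : x ∈ comp (opp Y) (comp (opp X) Z))
        (f : ↥(lHomSub (comp X Y) Z ρT ρP)),
        e (ρL ⟨x, hx1⟩ f) = ρR ⟨x, hx2⟩ (e f)) :=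
  ⟨extTenLHomEquiv hρT hρI, extTenLHomEquiv_apply hρT hρI,
    fun _ hx1 hx2 => extTenLHomEquiv_map_rep hρT hρI hρL hρR hx1 hx2⟩

/-- Adjunction between the extended tensor product and the extended
`Hom`:
`LHom^{X*Y,Z}_{𝕜G}(M ⊗^{X,Y}_{𝕜H} N, P) ≅ LHom^{Y,X°*Z}_{𝕜H}(N, LHom^{X,Z}_{𝕜G}(M,P))`
as `𝕜[(X*Y)°*Z]`-modules, via `f ↦ (n ↦ (m ↦ f(m⊗n)))`. -/
theorem stmt7 {𝕜 : Type*} [CommRing 𝕜]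
    {G H K L : Type*} [Group G] [Group H] [Group K] [Group L]
    [Finite G] [Finite H] [Finite K] [Finite L]
    (X : Subgroup (G × H)) (Y : Subgroup (H × K)) (Z : Subgroup (G × L))
    {M N P : Type*} [AddCommGroup M] [Module 𝕜 M] [AddCommGroup N] [Module 𝕜 N]
    [AddCommGroup P] [Module 𝕜 P]
    (ρM : Representation 𝕜 ↥X M) (ρN : Representation 𝕜 ↥Y N)
    (ρP : Representation 𝕜 ↥Z P)
    -- the `𝕜[X*Y]`-module structure on `M ⊗^{X,Y}_{𝕜H} N`
    (ρT : Representation 𝕜 ↥(comp X Y) (ExtTen X Y ρM ρN))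
    (hρT : ∀ (g : G) (k : K) (hgk : (g, k) ∈ comp X Y) (h : H)
      (h1 : (g, h) ∈ X) (h2 : (h, k) ∈ Y) (m : M) (n : N),
      ρT ⟨(g, k), hgk⟩ (extMk X Y ρM ρN (m ⊗ₜ[𝕜] n)) =
        extMk X Y ρM ρN ((ρM ⟨(g, h), h1⟩ m) ⊗ₜ[𝕜] (ρN ⟨(h, k), h2⟩ n)))
    -- the `𝕜[(X*Y)°*Z]`-module structure on `LHom^{X*Y,Z}(M ⊗^{X,Y} N, P)`
    (ρL : Representation 𝕜 ↥(comp (opp (comp X Y)) Z)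
      ↥(lHomSub (comp X Y) Z ρT ρP))
    (hρL : ∀ (b : K) (c : L) (hbc : (b, c) ∈ comp (opp (comp X Y)) Z)
      (a : G) (h1 : (a, b) ∈ comp X Y) (h2 : (a, c) ∈ Z)
      (f : ↥(lHomSub (comp X Y) Z ρT ρP)) (t : ExtTen X Y ρM ρN),
      ((ρL ⟨(b, c), hbc⟩ f : ExtTen X Y ρM ρN →ₗ[𝕜] P)) t =
        ρP ⟨(a, c), h2⟩ ((f : ExtTen X Y ρM ρN →ₗ[𝕜] P) (ρT (⟨(a, b), h1⟩)⁻¹ t)))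
    -- the `𝕜[X°*Z]`-module structure on `LHom^{X,Z}(M,P)`
    (ρI : Representation 𝕜 ↥(comp (opp X) Z) ↥(lHomSub X Z ρM ρP))
    (hρI : ∀ (b : H) (c : L) (hbc : (b, c) ∈ comp (opp X) Z)
      (a : G) (h1 : (a, b) ∈ X) (h2 : (a, c) ∈ Z)
      (f : ↥(lHomSub X Z ρM ρP)) (m : M),
      ((ρI ⟨(b, c), hbc⟩ f : M →ₗ[𝕜] P)) m =
        ρP ⟨(a, c), h2⟩ ((f : M →ₗ[𝕜] P) (ρM (⟨(a, b), h1⟩)⁻¹ m)))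
    -- the `𝕜[Y°*(X°*Z)]`-module structure on `LHom^{Y,X°*Z}(N, LHom^{X,Z}(M,P))`
    (ρR : Representation 𝕜 ↥(comp (opp Y) (comp (opp X) Z))
      ↥(lHomSub Y (comp (opp X) Z) ρN ρI))
    (hρR : ∀ (b : K) (c : L) (hbc : (b, c) ∈ comp (opp Y) (comp (opp X) Z))
      (a : H) (h1 : (a, b) ∈ Y) (h2 : (a, c) ∈ comp (opp X) Z)
      (f : ↥(lHomSub Y (comp (opp X) Z) ρN ρI)) (n : N),
      ((ρR ⟨(b, c), hbc⟩ f : N →ₗ[𝕜] ↥(lHomSub X Z ρM ρP))) n =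
        ρI ⟨(a, c), h2⟩ ((f : N →ₗ[𝕜] ↥(lHomSub X Z ρM ρP)) (ρN (⟨(a, b), h1⟩)⁻¹ n))) :
    ∃ e : ↥(lHomSub (comp X Y) Z ρT ρP) ≃ₗ[𝕜] ↥(lHomSub Y (comp (opp X) Z) ρN ρI),
      (∀ (f : ↥(lHomSub (comp X Y) Z ρT ρP)) (n : N) (m : M),
        (((e f : N →ₗ[𝕜] ↥(lHomSub X Z ρM ρP)) n : M →ₗ[𝕜] P)) m =
          (f : ExtTen X Y ρM ρN →ₗ[𝕜] P) (extMk X Y ρM ρN (m ⊗ₜ[𝕜] n))) ∧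
      (∀ (x : K × L) (hx1 : x ∈ comp (opp (comp X Y)) Z)
        (hx2 : x ∈ comp (opp Y) (comp (opp X) Z))
        (f : ↥(lHomSub (comp X Y) Z ρT ρP)),
        e (ρL ⟨x, hx1⟩ f) = ρR ⟨x, hx2⟩ (e f)) :=
  stmt7_general X Y Z ρM ρN ρP ρT hρT ρL hρL ρI hρI ρR hρR

end Stmt7
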